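/- Quotienting a Büchi automaton by delayed similarity preserves its language: L(A/≃_de) = L(A). -/
import Mathlib


open scoped Classical

universe u v

/-- A (nondeterministic) Büchi automaton. -/
structure BA (A : Type u) (Q : Type v) where
  δ : Q → A → Set Q
  I : Set Q
  F : Set Q

namespace BA

variable {A : Type u} {Q : Type v}

/-- Completeness: every state has a successor on every symbol. -/
def Complete (M : BA A Q) : Prop := ∀ q a, (M.δ q a).Nonempty

/-- `ρ` is a run of `M` over the infinite word `α` (from `ρ 0`). -/
def IsRun (M : BA A Q) (α : ℕ → A) (ρ : ℕ → Q) : Prop :=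
  ∀ i, ρ (i + 1) ∈ M.δ (ρ i) (α i)

/-- `M` accepts `α` from state `q` (some run from `q` visits `F` infinitely often). -/
def AcceptsFrom (M : BA A Q) (q : Q) (α : ℕ → A) : Prop :=
  ∃ ρ, ρ 0 = q ∧ M.IsRun α ρ ∧ ∀ n, ∃ m ≥ n, ρ m ∈ M.F

def LangFrom (M : BA A Q) (q : Q) : Set (ℕ → A) := {α | M.AcceptsFrom q α}

def Lang (M : BA A Q) : Set (ℕ → A) := {α | ∃ q ∈ M.I, M.AcceptsFrom q α}

/-! ### Simulation games -/

/-- A (positional, total) Duplicator strategy: given Duplicator's current state and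
Spoiler's transition `p →a p'`, pick Duplicator's next state, which must be an
`a`-successor of Duplicator's current state. -/
def IsStrategy (M : BA A Q) (σ : Q → Q → A → Q → Q) : Prop :=
  ∀ r p a p', σ r p a p' ∈ M.δ r a

/-- The trace produced by Duplicator following strategy `σ` from `r` against
Spoiler's trace `ρ` over the word `α`. -/
def play (σ : Q → Q → A → Q → Q) (r : Q) (α : ℕ → A) (ρ : ℕ → Q) : ℕ → Q
  | 0 => r
  | i + 1 => σ (play σ r α ρ i) (ρ i) (α i) (ρ (i + 1))

/-- Direct-simulation winning condition. -/
def CondDi (M : BA A Q) (ρ τ : ℕ → Q) : Prop := ∀ i, ρ i ∈ M.F → τ i ∈ M.F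

/-- Delayed-simulation winning condition. -/
def CondDe (M : BA A Q) (ρ τ : ℕ → Q) : Prop := ∀ i, ρ i ∈ M.F → ∃ k ≥ i, τ k ∈ M.F

/-- Fair-simulation winning condition. -/
def CondF (M : BA A Q) (ρ τ : ℕ → Q) : Prop :=
  (∀ n, ∃ m ≥ n, ρ m ∈ M.F) → (∀ n, ∃ m ≥ n, τ m ∈ M.F)

/-- `σ` is winning for Duplicator from configuration `(p, q)` wrt condition `C`. -/
def WinsFrom (M : BA A Q) (C : (ℕ → Q) → (ℕ → Q) → Prop)
    (σ : Q → Q → A → Q → Q) (p q : Q) : Prop :=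
  ∀ α ρ, ρ 0 = p → M.IsRun α ρ → C ρ (play σ q α ρ)

/-- The (maximal) simulation relation given by winning condition `C`. -/
def Sim (M : BA A Q) (C : (ℕ → Q) → (ℕ → Q) → Prop) (p q : Q) : Prop :=
  ∃ σ, M.IsStrategy σ ∧ M.WinsFrom C σ p q

def DiSim (M : BA A Q) : Q → Q → Prop := M.Sim M.CondDi
def DeSim (M : BA A Q) : Q → Q → Prop := M.Sim M.CondDe
def FairSim (M : BA A Q) : Q → Q → Prop := M.Sim M.CondF

/-! ### Run DAGs and ranks -/

/-- Vertices of the run DAG of `M` over `α`. -/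
def DagV (M : BA A Q) (α : ℕ → A) : Set (Q × ℕ) :=
  {v | ∃ ρ, ρ 0 ∈ M.I ∧ M.IsRun α ρ ∧ ρ v.2 = v.1}

/-- The edge relation of the run DAG. -/
def dagStep (M : BA A Q) (α : ℕ → A) (u v : Q × ℕ) : Prop :=
  v.2 = u.2 + 1 ∧ v.1 ∈ M.δ u.1 (α u.2)

/-- Reachability inside a sub-DAG `G`. -/
def reachIn (M : BA A Q) (α : ℕ → A) (G : Set (Q × ℕ)) : Q × ℕ → Q × ℕ → Prop :=
  Relation.ReflTransGen (fun u v => u ∈ G ∧ v ∈ G ∧ M.dagStep α u v)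

/-- A vertex of `G` is finite if it reaches only finitely many vertices inside `G`. -/
def FiniteIn (M : BA A Q) (α : ℕ → A) (G : Set (Q × ℕ)) (v : Q × ℕ) : Prop :=
  v ∈ G ∧ {u | M.reachIn α G v u}.Finite

/-- A vertex of `G` is endangered if it reaches no accepting vertex inside `G`. -/
def EndangeredIn (M : BA A Q) (α : ℕ → A) (G : Set (Q × ℕ)) (v : Q × ℕ) : Prop :=
  v ∈ G ∧ ∀ u, M.reachIn α G v u → u.1 ∉ M.F

/-- The decreasing sequence of DAGs of the ranking procedure: at even steps remove
the finite vertices, at odd steps remove the endangered vertices. -/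
def dagSeq (M : BA A Q) (α : ℕ → A) : ℕ → Set (Q × ℕ)
  | 0 => M.DagV α
  | j + 1 =>
      if Even j then M.dagSeq α j \ {v | M.FiniteIn α (M.dagSeq α j) v}
      else M.dagSeq α j \ {v | M.EndangeredIn α (M.dagSeq α j) v}

/-- The rank of a vertex: the step `j ≤ 2n` at which it is removed in the ranking
procedure, and `ω` (i.e. `⊤`) if it is never removed within `2n + 1` steps. -/
noncomputable def rank (M : BA A Q) (α : ℕ → A) (n : ℕ) (v : Q × ℕ) : ℕ∞ :=
  if ∃ j ≤ 2 * n, v ∈ M.dagSeq α j ∧ v ∉ M.dagSeq α (j + 1) then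
    ((sInf {j | v ∈ M.dagSeq α j ∧ v ∉ M.dagSeq α (j + 1)} : ℕ) : ℕ∞)
  else ⊤

end BA

/-! ### Schewe's rank-based complementation -/

/-- A macrostate `(S, O, f, i)` of the rank-based construction. -/
structure Macro (Q : Type v) where
  S : Set Q
  O : Set Q
  f : Q → ℕ
  i : ℕ

/-- The rank of a level ranking `f`: its maximal value. -/
def rankOf {Q : Type v} [Fintype Q] (f : Q → ℕ) : ℕ := Finset.univ.sup f

/-- The smallest even number `≥ k`. -/
def rondNat (k : ℕ) : ℕ := if Even k then k else k + 1

/-- The smallest even number `≥ x`, with `⌈ω⌉ = ω`. -/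
def rondE (x : ℕ∞) : ℕ∞ := WithTop.map rondNat x

namespace BA

variable {A : Type u} {Q : Type v}

/-- A level ranking: ranks bounded by `2n`, accepting states get even ranks. -/
def LevelRanking (M : BA A Q) (n : ℕ) (f : Q → ℕ) : Prop :=
  (∀ q, f q ≤ 2 * n) ∧ ∀ q ∈ M.F, Even (f q)

/-- `f` is `S`-tight. -/
def STight [Fintype Q] (M : BA A Q) (n : ℕ) (S : Set Q) (f : Q → ℕ) : Prop :=
  M.LevelRanking n f ∧ Odd (rankOf f) ∧
  (∀ m, Odd m → m ≤ rankOf f → ∃ s ∈ S, f s = m) ∧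
  ∀ q ∉ S, f q = 0

/-- Successors of a set of states. -/
def δSet (M : BA A Q) (S : Set Q) (a : A) : Set Q := ⋃ q ∈ S, M.δ q a

/-- Validity of a macrostate, i.e., membership in `Q₂`. -/
def Q2Valid [Fintype Q] (M : BA A Q) (n : ℕ) (m : Macro Q) : Prop :=
  M.STight n m.S m.f ∧ m.O ⊆ m.S ∩ {q | m.f q = m.i} ∧ Even m.i ∧ m.i + 2 ≤ 2 * n

/-- The `δ₃` successor condition of the rank-based construction, where `cl` is the
closure operator applied to the successor set (use `cl = id` for the plain
construction). -/
def macroSucc [Fintype Q] (M : BA A Q) (cl : Set Q → Set Q) (m m' : Macro Q)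
    (a : A) : Prop :=
  m'.S = cl (M.δSet m.S a) ∧
  (∀ q ∈ m.S, ∀ q' ∈ M.δ q a, m'.f q' ≤ m.f q) ∧
  rankOf m'.f = rankOf m.f ∧
  ((m.O = ∅ ∧ m'.i = (m.i + 2) % (rankOf m'.f + 1) ∧ m'.O = {q | m'.f q = m'.i}) ∨
   (m.O ≠ ∅ ∧ m'.i = m.i ∧ m'.O = M.δSet m.O a ∩ {q | m'.f q = m'.i}))

/-- Schewe's rank-based complement construction, parameterized by a predicate
`keep` selecting which macrostates of `Q₂` are kept (use `fun _ => True` for the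
plain construction) and a closure `cl` applied to successor sets (use `id` for
the plain construction). -/
def schewe [Fintype Q] (M : BA A Q) (n : ℕ) (keep : Macro Q → Prop)
    (cl : Set Q → Set Q) : BA A (Set Q ⊕ Macro Q) where
  δ := fun s a =>
    match s with
    | Sum.inl S =>
        {Sum.inl (cl (M.δSet S a))} ∪
        {s' | ∃ m : Macro Q, s' = Sum.inr m ∧ m.S = cl (M.δSet S a) ∧ m.O = ∅ ∧
              m.i = 0 ∧ M.Q2Valid n m ∧ keep m}
    | Sum.inr m =>
        {s' | ∃ m' : Macro Q, s' = Sum.inr m' ∧ M.macroSucc cl m m' a ∧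
              M.Q2Valid n m' ∧ keep m'}
  I := {Sum.inl M.I}
  F := {Sum.inl (∅ : Set Q)} ∪
       {s | ∃ m : Macro Q, s = Sum.inr m ∧ m.O = ∅ ∧ M.Q2Valid n m ∧ keep m}

/-! ### Finite paths, quotients, added transitions -/

/-- Finite path from `p` to `q` over the finite word `w`. -/
inductive Path (M : BA A Q) : Q → List A → Q → Prop
  | nil (q : Q) : Path M q [] q
  | cons {p q r : Q} {a : A} {w : List A} :
      q ∈ M.δ p a → Path M q w r → Path M p (a :: w) r

/-- Finite path from `p` to `q` over `w` that visits an accepting state. -/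
inductive APath (M : BA A Q) : Q → List A → Q → Prop
  | here {p : Q} {w : List A} {q : Q} : p ∈ M.F → Path M p w q → APath M p w q
  | step {p q r : Q} {a : A} {w : List A} :
      q ∈ M.δ p a → APath M q w r → APath M p (a :: w) r

/-- The factor of the infinite word `α` between positions `i` (included) and
`j` (excluded). -/
def wordSeg (α : ℕ → A) (i j : ℕ) : List A := (List.range (j - i)).map fun m => α (i + m)

/-- `α` belongs to the ω-power `L^ω` of the language `L` of finite words. -/
def InOmegaPow (L : Language A) (α : ℕ → A) : Prop :=
  ∃ t : ℕ → ℕ, t 0 = 0 ∧ StrictMono t ∧ ∀ k, wordSeg α (t k) (t (k + 1)) ∈ L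

/-- The automaton `M` with the extra transition `r →a p` added. -/
def addTr (M : BA A Q) (r : Q) (a : A) (p : Q) : BA A Q where
  δ := fun s b => M.δ s b ∪ {x | s = r ∧ b = a ∧ x = p}
  I := M.I
  F := M.F

/-- The quotient automaton of `M` by the equivalence (setoid) `s`. -/
def quotBA (M : BA A Q) (s : Setoid Q) : BA A (Quotient s) where
  δ := fun c a => {c' | ∃ u u', Quotient.mk s u = c ∧ Quotient.mk s u' = c' ∧ u' ∈ M.δ u a}
  I := {c | ∃ u ∈ M.I, Quotient.mk s u = c}
  F := {c | ∃ u ∈ M.F, Quotient.mk s u = c}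

end BA


namespace Stmt16Aux

variable {A : Type u} {Q : Type v}

/-- Inner (downward-in-height) recursion computing column `i+1` of the stack of
simulation plays from column `i`. `dstep ... m` is the pair
(f-thread, v-thread) at height `i - m + 1`... indexed so that
`col (i+1) k = dstep ... (i+1-k)`. -/
def dstep (α : ℕ → A) (u : ℕ → Q) (σs τs : ℕ → Q → Q → A → Q → Q)
    (base : Q × Q) (i : ℕ) (prev : ℕ → Q × Q) : ℕ → Q × Q
  | 0 => base
  | m + 1 =>
      let k := i - m
      let ih := dstep α u σs τs base i prev m
      let fn := σs k (prev k).1 (if i = k then u k else (prev (k + 1)).2) (α i) ih.2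
      (fn, τs k (prev k).2 (prev k).1 (α i) fn)

/-- The doubly-indexed family of states: `colAux ... i k = (F-thread k at time i,
V-thread k at time i)`. -/
def colAux (α : ℕ → A) (u v f : ℕ → Q) (σs τs : ℕ → Q → Q → A → Q → Q) :
    ℕ → ℕ → Q × Q
  | 0, _ => (f 0, v 0)
  | i + 1, k => dstep α u σs τs (f (i + 1), v (i + 1)) i
      (fun k' => colAux α u v f σs τs i k') (i + 1 - k)

lemma colAux_top (α : ℕ → A) (u v f : ℕ → Q) (σs τs : ℕ → Q → Q → A → Q → Q)
    {i k : ℕ} (h : i ≤ k) : colAux α u v f σs τs i k = (f i, v i) := by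
  cases i with
  | zero => rfl
  | succ i =>
      have h0 : i + 1 - k = 0 := Nat.sub_eq_zero_of_le h
      show dstep _ _ _ _ _ _ _ (i + 1 - k) = _
      rw [h0]; rfl

lemma colAux_succ (α : ℕ → A) (u v f : ℕ → Q) (σs τs : ℕ → Q → Q → A → Q → Q)
    {i k : ℕ} (h : k ≤ i) :
    colAux α u v f σs τs (i + 1) k =
      (σs k (colAux α u v f σs τs i k).1
          (if i = k then u k else (colAux α u v f σs τs i (k + 1)).2) (α i)
          (colAux α u v f σs τs (i + 1) (k + 1)).2,
       τs k (colAux α u v f σs τs i k).2 (colAux α u v f σs τs i k).1 (α i)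
          (σs k (colAux α u v f σs τs i k).1
            (if i = k then u k else (colAux α u v f σs τs i (k + 1)).2) (α i)
            (colAux α u v f σs τs (i + 1) (k + 1)).2)) := by
  have h1 : i + 1 - k = (i - k) + 1 := by omega
  have h2 : i - (i - k) = k := by omega
  have h3 : colAux α u v f σs τs (i + 1) (k + 1)
      = dstep α u σs τs (f (i+1), v (i+1)) i (fun k' => colAux α u v f σs τs i k') (i - k) := by
    show dstep _ _ _ _ _ _ _ (i + 1 - (k + 1)) = _
    rw [Nat.succ_sub_succ]
  show dstep _ _ _ _ _ _ _ (i + 1 - k) = _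
  rw [h1]
  show (let k' := i - (i - k);
        let ih := dstep α u σs τs (f (i+1), v (i+1)) i (fun k' => colAux α u v f σs τs i k') (i - k);
        let fn := σs k' (colAux α u v f σs τs i k').1
          (if i = k' then u k' else (colAux α u v f σs τs i (k' + 1)).2) (α i) ih.2;
        (fn, τs k' (colAux α u v f σs τs i k').2 (colAux α u v f σs τs i k').1 (α i) fn)) = _
  rw [← h3]
  simp only [h2]

end Stmt16Aux

namespace Stmt16Aux

section
variable {A : Type u} {Q : Type v} (M : BA A Q) (α : ℕ → A) (u v f : ℕ → Q)
  (σs τs : ℕ → Q → Q → A → Q → Q)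

local notation "CA" => colAux α u v f σs τs

/-- The spoiler run for the `f`-thread number `k`. -/
def SP (k i : ℕ) : Q := if i = k then u k else (colAux α u v f σs τs i (k + 1)).2

local notation "SPA" => SP α u v f σs τs

lemma hV {k i : ℕ} (h : k ≤ i) :
    (CA (i + 1) k).2 = τs k (CA i k).2 (CA i k).1 (α i) ((CA (i + 1) k).1) := by
  rw [colAux_succ α u v f σs τs h]

lemma hF {k i : ℕ} (h : k ≤ i) :
    (CA (i + 1) k).1 = σs k (CA i k).1
      (if i = k then u k else (CA i (k + 1)).2) (α i) ((CA (i + 1) (k + 1)).2) := by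
  rw [colAux_succ α u v f σs τs h]

lemma hVrun (hτ : ∀ k, M.IsStrategy (τs k)) {k i : ℕ} (h : k ≤ i) :
    (CA (i + 1) k).2 ∈ M.δ ((CA i k).2) (α i) := by
  rw [hV α u v f σs τs h]; exact hτ k _ _ _ _

lemma hFrun (hσ : ∀ k, M.IsStrategy (σs k)) {k i : ℕ} (h : k ≤ i) :
    (CA (i + 1) k).1 ∈ M.δ ((CA i k).1) (α i) := by
  rw [hF α u v f σs τs h]; exact hσ k _ _ _ _

lemma SP_run (hτ : ∀ k, M.IsStrategy (τs k)) (huv : ∀ k, v (k + 1) ∈ M.δ (u k) (α k))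
    {k i : ℕ} (h : k ≤ i) :
    SPA k (i + 1) ∈ M.δ (SPA k i) (α i) := by
  rcases eq_or_lt_of_le h with rfl | hlt
  · show (if k + 1 = k then u k else (CA (k+1) (k+1)).2) ∈ M.δ (if k = k then u k else _) (α k)
    rw [if_neg (by omega : ¬ k + 1 = k), if_pos rfl,
      colAux_top α u v f σs τs (le_refl (k+1))]
    exact huv k
  · show (if i + 1 = k then u k else (CA (i+1) (k+1)).2) ∈ M.δ (if i = k then u k else (CA i (k+1)).2) (α i)
    rw [if_neg (by omega : ¬ i + 1 = k), if_neg (by omega : ¬ i = k)]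
    exact hVrun M α u v f σs τs hτ (by omega)

lemma playF {k : ℕ} : ∀ m : ℕ,
    BA.play (σs k) (f k) (fun j => α (k + j)) (fun j => SPA k (k + j)) m = (CA (k + m) k).1
  | 0 => by
      show f k = (CA k k).1
      rw [colAux_top α u v f σs τs (le_refl k)]
  | m + 1 => by
      show σs k (BA.play (σs k) (f k) (fun j => α (k + j)) (fun j => SPA k (k + j)) m)
          (SPA k (k + m)) (α (k + m)) (SPA k (k + (m + 1))) = (CA (k + (m + 1)) k).1
      show _ = (CA (k + m + 1) k).1
      rw [playF m, hF α u v f σs τs (Nat.le_add_right k m)]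
      show σs k _ (SPA k (k + m)) _ (SPA k (k + m + 1)) = _
      have h1 : SPA k (k + m) = if k + m = k then u k else (CA (k + m) (k + 1)).2 := rfl
      have h2 : SPA k (k + m + 1) = (CA (k + m + 1) (k + 1)).2 :=
        if_neg (by omega : ¬ k + m + 1 = k)
      rw [h1, h2]

lemma playV {k : ℕ} : ∀ m : ℕ,
    BA.play (τs k) (v k) (fun j => α (k + j)) (fun j => (CA (k + j) k).1) m = (CA (k + m) k).2
  | 0 => by
      show v k = (CA k k).2
      rw [colAux_top α u v f σs τs (le_refl k)]
  | m + 1 => by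
      show τs k (BA.play (τs k) (v k) (fun j => α (k + j)) (fun j => (CA (k + j) k).1) m)
          ((CA (k + m) k).1) (α (k + m)) ((CA (k + (m + 1)) k).1) = (CA (k + (m + 1)) k).2
      show _ = (CA (k + m + 1) k).2
      rw [playV m, hV α u v f σs τs (Nat.le_add_right k m)]
      rfl

lemma C1 (hτ : ∀ k, M.IsStrategy (τs k)) (huv : ∀ k, v (k + 1) ∈ M.δ (u k) (α k))
    (hσw : ∀ k, M.WinsFrom M.CondDe (σs k) (u k) (f k))
    {k i : ℕ} (h : k ≤ i) (hsp : SPA k i ∈ M.F) :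
    ∃ j ≥ i, (CA j k).1 ∈ M.F := by
  have hρ0 : SPA k (k + 0) = u k := if_pos rfl
  have hρrun : M.IsRun (fun j => α (k + j)) (fun j => SPA k (k + j)) := fun j =>
    SP_run M α u v f σs τs hτ huv (Nat.le_add_right k j)
  have hcond := hσw k (fun j => α (k + j)) (fun j => SPA k (k + j)) hρ0 hρrun
  obtain ⟨m, hm, hmF⟩ := hcond (i - k)
    (by show SPA k (k + (i - k)) ∈ M.F; rw [show k + (i - k) = i from by omega]; exact hsp)
  rw [playF α u v f σs τs m] at hmF
  exact ⟨k + m, by omega, hmF⟩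

lemma C2 (hσ : ∀ k, M.IsStrategy (σs k))
    (hτw : ∀ k, M.WinsFrom M.CondDe (τs k) (f k) (v k))
    {k i : ℕ} (h : k ≤ i) (hf : (CA i k).1 ∈ M.F) :
    ∃ j ≥ i, (CA j k).2 ∈ M.F := by
  have hρ0 : (CA (k + 0) k).1 = f k := by
    show (CA k k).1 = f k
    rw [colAux_top α u v f σs τs (le_refl k)]
  have hρrun : M.IsRun (fun j => α (k + j)) (fun j => (CA (k + j) k).1) := fun j =>
    hFrun M α u v f σs τs hσ (Nat.le_add_right k j)
  have hcond := hτw k (fun j => α (k + j)) (fun j => (CA (k + j) k).1) hρ0 hρrun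
  obtain ⟨m, hm, hmF⟩ := hcond (i - k)
    (by show (CA (k + (i - k)) k).1 ∈ M.F; rw [show k + (i - k) = i from by omega]; exact hf)
  rw [playV α u v f σs τs m] at hmF
  exact ⟨k + m, by omega, hmF⟩

lemma propagate (hσ : ∀ k, M.IsStrategy (σs k)) (hτ : ∀ k, M.IsStrategy (τs k))
    (hσw : ∀ k, M.WinsFrom M.CondDe (σs k) (u k) (f k))
    (hτw : ∀ k, M.WinsFrom M.CondDe (τs k) (f k) (v k))
    (huv : ∀ k, v (k + 1) ∈ M.δ (u k) (α k)) :
    ∀ k i, k ≤ i → (CA i k).2 ∈ M.F → ∃ j ≥ i, (CA j 0).2 ∈ M.F := by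
  intro k
  induction k with
  | zero => exact fun i _ h => ⟨i, le_refl i, h⟩
  | succ k ih =>
      intro i hki hiF
      have hsp : SPA k i ∈ M.F := by
        show (if i = k then u k else (CA i (k + 1)).2) ∈ M.F
        rw [if_neg (by omega : ¬ i = k)]; exact hiF
      obtain ⟨j, hj, hjF⟩ := C1 M α u v f σs τs hτ huv hσw (by omega : k ≤ i) hsp
      obtain ⟨j2, hj2, hj2F⟩ := C2 M α u v f σs τs hσ hτw (by omega : k ≤ j) hjF
      obtain ⟨j3, hj3, hj3F⟩ := ih j2 (by omega) hj2F
      exact ⟨j3, by omega, hj3F⟩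

end
end Stmt16Aux

/-- quotienting by delayed similarity preserves the language. -/
theorem stmt16 {A : Type u} {Q : Type v} (M : BA A Q)
    (s : Setoid Q)
    (hs : ∀ u v : Q, s.r u v ↔ (M.DeSim u v ∧ M.DeSim v u)) :
    (M.quotBA s).Lang = M.Lang := by
  ext α
  constructor
  · rintro ⟨c, hcI, π, hπ0, hπrun, hπF⟩
    obtain ⟨q₀, hq₀I, hq₀c⟩ := hcI
    have hstep : ∀ i, ∃ a b, Quotient.mk s a = π i ∧ Quotient.mk s b = π (i + 1) ∧
        b ∈ M.δ a (α i) := fun i => hπrun i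
    choose U W hU hW hUW using hstep
    set v : ℕ → Q := fun k => Nat.rec q₀ (fun n _ => W n) k with hvdef
    have hvc : ∀ k, Quotient.mk s (v k) = π k := by
      intro k
      cases k with
      | zero => exact hq₀c.trans hπ0.symm
      | succ n => exact hW n
    have hfex : ∀ k, ∃ x, Quotient.mk s x = π k ∧
        ((∃ y ∈ M.F, Quotient.mk s y = π k) → x ∈ M.F) := by
      intro k
      by_cases h : ∃ y ∈ M.F, Quotient.mk s y = π k
      · obtain ⟨y, hyF, hyc⟩ := h
        exact ⟨y, hyc, fun _ => hyF⟩
      · exact ⟨U k, hU k, fun h' => absurd h' h⟩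
    choose f hfc hfF using hfex
    have hde1 : ∀ k, M.DeSim (U k) (f k) := fun k =>
      ((hs _ _).mp (Quotient.exact ((hU k).trans (hfc k).symm))).1
    have hde2 : ∀ k, M.DeSim (f k) (v k) := fun k =>
      ((hs _ _).mp (Quotient.exact ((hfc k).trans (hvc k).symm))).1
    choose σs hσ hσw using hde1
    choose τs hτ hτw using hde2
    have huv : ∀ k, v (k + 1) ∈ M.δ (U k) (α k) := fun k => hUW k
    refine ⟨q₀, hq₀I, fun i => (Stmt16Aux.colAux α U v f σs τs i 0).2, ?_, ?_, ?_⟩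
    · show (Stmt16Aux.colAux α U v f σs τs 0 0).2 = q₀
      rw [Stmt16Aux.colAux_top α U v f σs τs (le_refl 0)]
      rfl
    · intro i
      exact Stmt16Aux.hVrun M α U v f σs τs hτ (Nat.zero_le i)
    · intro n
      obtain ⟨m, hmn, hmF⟩ := hπF n
      have hfm : f m ∈ M.F := hfF m hmF
      have h1 : (Stmt16Aux.colAux α U v f σs τs m m).1 ∈ M.F := by
        rw [Stmt16Aux.colAux_top α U v f σs τs (le_refl m)]
        exact hfm
      obtain ⟨j, hj, hjF⟩ := Stmt16Aux.C2 M α U v f σs τs hσ hτw (le_refl m) h1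
      obtain ⟨j2, hj2, hj2F⟩ :=
        Stmt16Aux.propagate M α U v f σs τs hσ hτ hσw hτw huv m j hj hjF
      exact ⟨j2, by omega, hj2F⟩
  · rintro ⟨q, hqI, ρ, hρ0, hρrun, hρF⟩
    refine ⟨Quotient.mk s q, ⟨q, hqI, rfl⟩, fun i => Quotient.mk s (ρ i),
      by show Quotient.mk s (ρ 0) = Quotient.mk s q; rw [hρ0], ?_, ?_⟩
    · intro i
      exact ⟨ρ i, ρ (i + 1), rfl, rfl, hρrun i⟩
    · intro n
      obtain ⟨m, hmn, hmF⟩ := hρF n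
      exact ⟨m, hmn, ρ m, hmF, rfl⟩
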